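/- arXiv:2109.13370 — 4 statements merged into one kernel-verified Lean document; each statement's English description precedes it below -/
import Mathlib

section
/- Let a₁, a₂, a₃ be real numbers with a₁ ≠ 0, a₂ ≠ 0 and with a₁², a₂², a₃² pairwise distinct. Then for every real t, ∫₀ᵗ (sin((t−s₁)a₁)/a₁) · ( ∫₀^{s₁} (sin((s₁−s₂)a₂)/a₂) · cos(s₂a₃) ds₂ ) ds₁ = (cos(t a₂) − cos(t a₁))/((a₂² − a₁²)(a₂² − a₃²)) + (cos(t a₃) − cos(t a₁))/((a₃² − a₁²)(a₃² − a₂²)). -/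
/-!
Each layer of the iterated integral is a convolution on `[0, s]` of `sin (a ·) / a` with a
cosine, and by the product-to-sum formula such a convolution has an explicit primitive, giving
`∫₀ᵗ sin ((t - s) a) / a · cos (s b) ds = (cos (t b) - cos (t a)) / (a² - b²)`.
Applying this to the inner integral turns it into a difference of two cosines, and applying it
twice more to the outer integral yields the partial-fraction expression.
-/

open Real intervalIntegral

lemma hasDerivAt_sin_conv_cos_primitive (a b t s : ℝ) (hm : a - b ≠ 0) (hp : a + b ≠ 0) :
    HasDerivAt
      (fun x => (cos ((t - x) * a + x * b) / (a - b) + cos ((t - x) * a - x * b) / (a + b))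
        / (2 * a))
      (sin ((t - s) * a) / a * cos (s * b)) s := by
  have hplus : HasDerivAt (fun x : ℝ => (t - x) * a + x * b) (-(a - b)) s :=
    ((((hasDerivAt_id s).const_sub t).mul_const a).add
      ((hasDerivAt_id s).mul_const b)).congr_deriv (by ring)
  have hminus : HasDerivAt (fun x : ℝ => (t - x) * a - x * b) (-(a + b)) s :=
    ((((hasDerivAt_id s).const_sub t).mul_const a).sub
      ((hasDerivAt_id s).mul_const b)).congr_deriv (by ring)
  refine (((hplus.cos.div_const (a - b)).add (hminus.cos.div_const (a + b))).div_const
    (2 * a)).congr_deriv ?_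
  rw [sin_add, sin_sub]
  field_simp
  ring

lemma integral_sin_sub_mul_div_mul_cos (a b t : ℝ) (ha : a ≠ 0) (hab : a ^ 2 ≠ b ^ 2) :
    ∫ s in (0 : ℝ)..t, sin ((t - s) * a) / a * cos (s * b)
      = (cos (t * b) - cos (t * a)) / (a ^ 2 - b ^ 2) := by
  have hm : a - b ≠ 0 := fun h => hab (by rw [sub_eq_zero.mp h])
  have hp : a + b ≠ 0 := fun h => hab (by rw [eq_neg_of_add_eq_zero_left h, neg_sq])
  have hd : a ^ 2 - b ^ 2 ≠ 0 := sub_ne_zero.mpr hab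
  rw [integral_eq_sub_of_hasDerivAt (fun s _ => hasDerivAt_sin_conv_cos_primitive a b t s hm hp)
    (by apply Continuous.intervalIntegrable; fun_prop)]
  simp only [sub_self, zero_mul, add_zero, zero_sub, cos_neg, sub_zero, zero_add]
  field_simp
  ring

theorem stmt_2 (a₁ a₂ a₃ : ℝ) (h1 : a₁ ≠ 0) (h2 : a₂ ≠ 0)
    (h12 : a₁ ^ 2 ≠ a₂ ^ 2) (h13 : a₁ ^ 2 ≠ a₃ ^ 2) (h23 : a₂ ^ 2 ≠ a₃ ^ 2) (t : ℝ) :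
    (∫ s₁ in (0:ℝ)..t, (Real.sin ((t - s₁) * a₁) / a₁) *
        ∫ s₂ in (0:ℝ)..s₁, (Real.sin ((s₁ - s₂) * a₂) / a₂) * Real.cos (s₂ * a₃))
      = (Real.cos (t * a₂) - Real.cos (t * a₁)) / ((a₂ ^ 2 - a₁ ^ 2) * (a₂ ^ 2 - a₃ ^ 2))
        + (Real.cos (t * a₃) - Real.cos (t * a₁)) / ((a₃ ^ 2 - a₁ ^ 2) * (a₃ ^ 2 - a₂ ^ 2)) := by
  have h23' : a₂ ^ 2 - a₃ ^ 2 ≠ 0 := sub_ne_zero.mpr h23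
  calc
    _ = ∫ s₁ in (0:ℝ)..t, (sin ((t - s₁) * a₁) / a₁ * cos (s₁ * a₃)
          - sin ((t - s₁) * a₁) / a₁ * cos (s₁ * a₂)) / (a₂ ^ 2 - a₃ ^ 2) := by
      refine integral_congr fun s₁ _ => ?_
      simp only [integral_sin_sub_mul_div_mul_cos a₂ a₃ s₁ h2 h23]
      field_simp
    _ = ((cos (t * a₃) - cos (t * a₁)) / (a₁ ^ 2 - a₃ ^ 2)
          - (cos (t * a₂) - cos (t * a₁)) / (a₁ ^ 2 - a₂ ^ 2)) / (a₂ ^ 2 - a₃ ^ 2) := by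
      rw [integral_div, integral_sub (by apply Continuous.intervalIntegrable; fun_prop)
        (by apply Continuous.intervalIntegrable; fun_prop),
        integral_sin_sub_mul_div_mul_cos a₁ a₃ t h1 h13,
        integral_sin_sub_mul_div_mul_cos a₁ a₂ t h1 h12]
    _ = _ := by
      have h12' : a₂ ^ 2 - a₁ ^ 2 ≠ 0 := sub_ne_zero.mpr h12.symm
      have h13' : a₃ ^ 2 - a₁ ^ 2 ≠ 0 := sub_ne_zero.mpr h13.symm
      have h32' : a₃ ^ 2 - a₂ ^ 2 ≠ 0 := sub_ne_zero.mpr h23.symm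
      field_simp
      ring
end

section
/- With h as defined, for every positive integer N there exists a constant C_N > 0, depending only on N, φ, η and ε, such that for every λ ≥ 2 and every τ > 0 one has |h(τ) − 1_{[0,λ]}(τ)| ≤ C_N · (1 + λ^{−1+η+ε}|τ − λ|)^{−N}, where 1_{[0,λ]} is the indicator function of the closed interval [0, λ]. -/
open MeasureTheory Real FourierTransform Set Complex


lemma aux_decay {φ : ℝ → ℝ} (hφ_smooth : ContDiff ℝ (⊤ : ℕ∞) φ) (hφ_supp : HasCompactSupport φ)
    (n : ℕ) :
    ∃ C : ℝ, 0 < C ∧ ∀ w : ℝ, (1 + |w|) ^ n * ‖𝓕 (fun x => (φ x : ℂ)) w‖ ≤ C := by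
  set f : ℝ → ℂ := fun x => (φ x : ℂ) with hf_def
  have hf : ContDiff ℝ (⊤ : ℕ∞) f := Complex.ofRealCLM.contDiff.comp hφ_smooth
  have hfs : HasCompactSupport f := hφ_supp.comp_left (g := Complex.ofReal) Complex.ofReal_zero
  have h'f : ∀ (k m : ℕ), (k:ℕ∞) ≤ (⊤:ℕ∞) → (m:ℕ∞) ≤ (⊤:ℕ∞) →
      Integrable (fun v : ℝ => ‖v‖ ^ k * ‖iteratedFDeriv ℝ m f v‖) := by
    intro k m _ _
    apply Continuous.integrable_of_hasCompactSupport
    · exact (continuous_norm.pow k).mul ((hf.continuous_iteratedFDeriv (by exact_mod_cast le_top)).norm)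
    · apply HasCompactSupport.mul_left
      exact (hfs.iteratedFDeriv m).norm
  set M : ℕ → ℝ := fun m =>
      ∑ p ∈ Finset.range (0 + 1) ×ˢ Finset.range (m + 1),
        ∫ (v : ℝ), |v| ^ p.1 * ‖iteratedFDeriv ℝ p.2 f v‖ with hM
  have key : ∀ m : ℕ, ∀ w : ℝ, |w| ^ m * ‖𝓕 f w‖ ≤ 2 ^ m * M m := by
    intro m w
    have := Real.pow_mul_norm_iteratedFDeriv_fourier_le (K := ⊤) (N := ⊤)
      (hf.of_le (by simp)) h'f (k := 0) (n := m) le_top le_top w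
    simpa [norm_iteratedFDeriv_zero, hM, Real.norm_eq_abs] using this
  have hMnonneg : ∀ m, 0 ≤ M m := by
    intro m
    apply Finset.sum_nonneg
    intro p _
    positivity
  refine ⟨2 ^ n * (M 0 + 2 ^ n * M n) + 1, by positivity, fun w => ?_⟩
  have h1 : (1 + |w|) ^ n ≤ 2 ^ n * (1 + |w| ^ n) := by
    calc (1 + |w|) ^ n ≤ (2 * max 1 |w|) ^ n := by
          apply pow_le_pow_left₀ (by positivity)
          rcases le_total 1 |w| with h | h
          · rw [max_eq_right h]; linarith
          · rw [max_eq_left h]; linarith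
      _ = 2 ^ n * (max 1 |w|) ^ n := by rw [mul_pow]
      _ ≤ 2 ^ n * (1 + |w| ^ n) := by
          gcongr
          rcases le_total 1 |w| with h | h
          · rw [max_eq_right h]
            nlinarith [pow_nonneg (abs_nonneg w) n]
          · rw [max_eq_left h, one_pow]
            nlinarith [pow_nonneg (abs_nonneg w) n]
  have h0 := key 0 w
  have hn := key n w
  simp only [pow_zero, one_mul] at h0
  have hF : (0:ℝ) ≤ ‖𝓕 f w‖ := norm_nonneg _
  calc (1 + |w|) ^ n * ‖𝓕 f w‖ ≤ 2 ^ n * (1 + |w| ^ n) * ‖𝓕 f w‖ :=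
        mul_le_mul_of_nonneg_right h1 hF
    _ = 2 ^ n * (‖𝓕 f w‖ + |w| ^ n * ‖𝓕 f w‖) := by ring
    _ ≤ 2 ^ n * (M 0 + 2 ^ n * M n) := by gcongr
    _ ≤ 2 ^ n * (M 0 + 2 ^ n * M n) + 1 := by linarith

lemma aux_psi_rel {φ : ℝ → ℝ} (hc : Continuous φ) (hφ_supp : HasCompactSupport φ) (v : ℝ) :
    ∫ s, φ s * Real.cos (v * s) = (𝓕 (fun x => (φ x : ℂ)) (v / (2 * π))).re := by
  have hint : Integrable (fun x : ℝ => 𝐞 (-(x * (v / (2 * π)))) • (φ x : ℂ)) := by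
    apply Continuous.integrable_of_hasCompactSupport
    · exact (Real.continuous_fourierChar.comp (by fun_prop)).smul
        (Complex.continuous_ofReal.comp hc)
    · exact (hφ_supp.comp_left (g := Complex.ofReal) Complex.ofReal_zero).smul_left
  rw [Real.fourier_real_eq, ← RCLike.re_to_complex, ← integral_re hint]
  apply integral_congr_ae
  filter_upwards with x
  rw [RCLike.re_to_complex, Circle.smul_def, Real.fourierChar_apply]
  have harg : 2 * π * -(x * (v / (2 * π))) = -(v * x) := by
    field_simp
  simp only [smul_eq_mul, Complex.mul_re, Complex.exp_ofReal_mul_I_re, Complex.exp_ofReal_mul_I_im, harg,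
    Real.cos_neg, Complex.ofReal_re, Complex.ofReal_im, mul_zero, sub_zero]
  ring
lemma aux_Fint {φ : ℝ → ℝ} (hφ_smooth : ContDiff ℝ (⊤ : ℕ∞) φ) (hφ_supp : HasCompactSupport φ) :
    Integrable (𝓕 (fun x => (φ x : ℂ))) := by
  obtain ⟨C, hC, hCb⟩ := aux_decay hφ_smooth hφ_supp 2
  have hint : Integrable (fun x => (φ x : ℂ)) :=
    ((Complex.continuous_ofReal.comp hφ_smooth.continuous).integrable_of_hasCompactSupport
      (hφ_supp.comp_left (g := Complex.ofReal) Complex.ofReal_zero))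
  refine Integrable.mono' ((integrable_one_add_norm (E := ℝ) (r := 2)
      (by norm_num)).const_mul C)
    (VectorFourier.fourierIntegral_continuous Real.continuous_fourierChar continuous_inner
      hint).aestronglyMeasurable ?_
  filter_upwards with w
  have h2 : (0:ℝ) < 1 + |w| := by positivity
  rw [show ‖w‖ = |w| from rfl, Real.rpow_neg h2.le, Real.rpow_two]
  rw [← div_eq_mul_inv, le_div_iff₀ (by positivity)]
  calc ‖𝓕 (fun x => (φ x : ℂ)) w‖ * (1 + |w|) ^ 2
      = (1 + |w|) ^ 2 * ‖𝓕 (fun x => (φ x : ℂ)) w‖ := by ring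
    _ ≤ C := hCb w
lemma aux_psi_int {φ : ℝ → ℝ} (hφ_smooth : ContDiff ℝ (⊤ : ℕ∞) φ) (hφ_supp : HasCompactSupport φ)
    (hφ0 : φ 0 = 1) :
    ∫ v : ℝ, (∫ s, φ s * Real.cos (v * s)) = 2 * π := by
  set f : ℝ → ℂ := fun x => (φ x : ℂ) with hf_def
  have hcont : Continuous f := Complex.continuous_ofReal.comp hφ_smooth.continuous
  have hint : Integrable f :=
    hcont.integrable_of_hasCompactSupport
      (hφ_supp.comp_left (g := Complex.ofReal) Complex.ofReal_zero)
  have hFint : Integrable (𝓕 f) := aux_Fint hφ_smooth hφ_supp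
  have hFint' : Integrable (fun v : ℝ => 𝓕 f (v / (2 * π))) :=
    hFint.comp_div (by positivity)
  have h1 : ∀ v : ℝ, (∫ s, φ s * Real.cos (v * s)) = (𝓕 f (v / (2 * π))).re := fun v =>
    aux_psi_rel hφ_smooth.continuous hφ_supp v
  have h2 : ∫ v : ℝ, (∫ s, φ s * Real.cos (v * s)) = (∫ v : ℝ, 𝓕 f (v / (2 * π))).re := by
    rw [← RCLike.re_to_complex, ← integral_re hFint']
    exact integral_congr_ae (by filter_upwards with v using by rw [h1 v, RCLike.re_to_complex])
  rw [h2, Measure.integral_comp_div (𝓕 f) (2 * π)]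
  have h3 : ∫ w : ℝ, 𝓕 f w = f 0 := by
    have hinv := hcont.fourierInv_fourier_eq hint hFint
    have := congrFun hinv 0
    rw [Real.fourierInv_eq] at this
    simpa using this
  rw [h3, hf_def]
  have : |2 * π| = 2 * π := abs_of_pos (by positivity)
  simp [Complex.smul_re, hφ0, this]
lemma aux_core {φ : ℝ → ℝ} (hc : Continuous φ) (hφ_supp : HasCompactSupport φ)
    (hψc : Continuous (fun v : ℝ => ∫ s, φ s * Real.cos (v * s)))
    {a b : ℝ} (ha : 0 < a) :
    ∫ s, φ s * (if s = 0 then a else Real.sin (a * s) / s) * Real.cos (b * s)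
      = (1/2) * ∫ u in (b - a)..(b + a), (∫ x, φ x * Real.cos (u * x)) := by
  set ψ : ℝ → ℝ := fun v => ∫ s, φ s * Real.cos (v * s) with hψ
  set F : ℝ → ℝ → ℝ := fun s u => φ s * Real.cos (b * s) * Real.cos (u * s) with hF
  have step1 : ∀ s : ℝ, φ s * (if s = 0 then a else Real.sin (a * s) / s) * Real.cos (b * s)
      = (1/2) * ∫ u in Set.Ioc (-a) a, F s u := by
    intro s
    have hIoc : ∫ u in Set.Ioc (-a) a, F s u = ∫ u in (-a)..a, F s u :=
      (intervalIntegral.integral_of_le (by linarith)).symm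
    rw [hIoc, hF]
    simp only
    have hpull : (∫ u in (-a)..a, φ s * Real.cos (b * s) * Real.cos (u * s))
        = (φ s * Real.cos (b * s)) * ∫ u in (-a)..a, Real.cos (u * s) :=
      intervalIntegral.integral_const_mul _ _
    rw [hpull]
    rcases eq_or_ne s 0 with rfl | hs
    · simp
      ring
    · have hcomp : (∫ u in (-a)..a, Real.cos (u * s)) = s⁻¹ • ∫ u in (-a*s)..(a*s), Real.cos u :=
        intervalIntegral.integral_comp_mul_right Real.cos hs
      rw [if_neg hs, hcomp, integral_cos]
      simp only [smul_eq_mul, neg_mul, Real.sin_neg]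
      field_simp
      ring
  rw [integral_congr_ae (Filter.Eventually.of_forall step1), integral_const_mul]
  congr 1
  -- Fubini
  have hFub : ∫ s : ℝ, ∫ u in Set.Ioc (-a) a, F s u
      = ∫ u in Set.Ioc (-a) a, ∫ s : ℝ, F s u := by
    apply MeasureTheory.integral_integral_swap
    have hmeas : AEStronglyMeasurable (Function.uncurry F)
        (MeasureTheory.volume.prod (MeasureTheory.volume.restrict (Set.Ioc (-a) a))) := by
      apply Continuous.aestronglyMeasurable
      apply Continuous.mul
      apply Continuous.mul
      · exact hc.comp continuous_fst
      · exact Real.continuous_cos.comp (continuous_const.mul continuous_fst)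
      · exact Real.continuous_cos.comp (continuous_snd.mul continuous_fst)
    have hgint : Integrable (fun p : ℝ × ℝ => |φ p.1| * 1)
        (MeasureTheory.volume.prod (MeasureTheory.volume.restrict (Set.Ioc (-a) a))) :=
      Integrable.mul_prod (hc.integrable_of_hasCompactSupport hφ_supp).abs
        (integrable_const 1)
    refine Integrable.mono' (by simpa using hgint) hmeas ?_
    filter_upwards with p
    rw [Function.uncurry, hF]
    simp only [Real.norm_eq_abs, abs_mul]
    calc |φ p.1| * |Real.cos (b * p.1)| * |Real.cos (p.2 * p.1)|
        ≤ |φ p.1| * 1 * 1 := by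
          have h1 := Real.abs_cos_le_one (b * p.1)
          have h2 := Real.abs_cos_le_one (p.2 * p.1)
          have h3 := abs_nonneg (φ p.1)
          have h4 := abs_nonneg (Real.cos (b * p.1))
          have h5 := abs_nonneg (Real.cos (p.2 * p.1))
          exact mul_le_mul (mul_le_mul_of_nonneg_left h1 h3) h2 h5 (by positivity)
      _ = |φ p.1| := by ring
  rw [hFub]
  -- inner integral
  have hinner : ∀ u : ℝ, ∫ s : ℝ, F s u = (1/2) * (ψ (u + b) + ψ (u - b)) := by
    intro u
    have hpt : ∀ s : ℝ, F s u
        = (1/2) * (φ s * Real.cos ((u + b) * s) + φ s * Real.cos ((u - b) * s)) := by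
      intro s
      rw [hF]
      simp only
      have h1 : (u + b) * s = u * s + b * s := by ring
      have h2 : (u - b) * s = u * s - b * s := by ring
      rw [h1, h2, Real.cos_add, Real.cos_sub]
      ring
    rw [integral_congr_ae (Filter.Eventually.of_forall hpt), integral_const_mul]
    have i1 : Integrable (fun s => φ s * Real.cos ((u + b) * s)) := by
      apply Continuous.integrable_of_hasCompactSupport
      · exact hc.mul (Real.continuous_cos.comp (continuous_const.mul continuous_id))
      · exact hφ_supp.mul_right
    have i2 : Integrable (fun s => φ s * Real.cos ((u - b) * s)) := by
      apply Continuous.integrable_of_hasCompactSupport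
      · exact hc.mul (Real.continuous_cos.comp (continuous_const.mul continuous_id))
      · exact hφ_supp.mul_right
    rw [integral_add i1 i2]
  rw [setIntegral_congr_fun measurableSet_Ioc (fun u _ => hinner u)]
  have hIoc2 : ∫ u in Set.Ioc (-a) a, (1/2) * (ψ (u + b) + ψ (u - b))
      = ∫ u in (-a)..a, (1/2) * (ψ (u + b) + ψ (u - b)) :=
    (intervalIntegral.integral_of_le (by linarith)).symm
  rw [hIoc2]
  have hψib : ∀ c d e : ℝ, IntervalIntegrable (fun u => ψ (u + e)) MeasureTheory.volume c d :=
    fun c d e => ((hψc.comp (continuous_id.add continuous_const)).intervalIntegrable c d)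
  rw [intervalIntegral.integral_const_mul]
  have split : (∫ u in (-a)..a, (ψ (u + b) + ψ (u - b)))
      = (∫ u in (-a)..a, ψ (u + b)) + ∫ u in (-a)..a, ψ (u - b) := by
    have h2 : IntervalIntegrable (fun u => ψ (u - b)) MeasureTheory.volume (-a) a := by
      simpa [sub_eq_add_neg] using hψib (-a) a (-b)
    exact intervalIntegral.integral_add (hψib (-a) a b) h2
  rw [split]
  have e1 : (∫ u in (-a)..a, ψ (u + b)) = ∫ u in (b-a)..(b+a), ψ u := by
    rw [intervalIntegral.integral_comp_add_right ψ b]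
    congr 1 <;> ring
  have e2 : (∫ u in (-a)..a, ψ (u - b)) = ∫ u in (b-a)..(b+a), ψ u := by
    have heven : ∀ t : ℝ, ψ (-t) = ψ t := by
      intro t
      rw [hψ]
      simp only
      apply integral_congr_ae
      filter_upwards with s
      rw [neg_mul, Real.cos_neg]
    have : (∫ u in (-a)..a, ψ (u - b)) = ∫ u in (-a - b)..(a - b), ψ u := by
      simpa [sub_eq_add_neg] using intervalIntegral.integral_comp_add_right ψ (-b)
    rw [this]
    have hneg : (∫ u in (b-a)..(b+a), ψ (-u)) = ∫ u in (-(b+a))..(-(b-a)), ψ u :=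
      intervalIntegral.integral_comp_neg ψ
    have hL : (∫ u in (b-a)..(b+a), ψ (-u)) = ∫ u in (b-a)..(b+a), ψ u :=
      intervalIntegral.integral_congr (fun u _ => heven u)
    rw [hL] at hneg
    rw [hneg]
    congr 1 <;> ring
  rw [e1, e2]
  ring
lemma aux_tail {ψ : ℝ → ℝ} (hm : Continuous ψ) {C1 : ℝ} (hC1 : 0 < C1) {N : ℕ} (hN : 1 ≤ N)
    (hb : ∀ v : ℝ, |ψ v| ≤ C1 * (1 + |v|) ^ (-((N:ℝ)+1)))
    {A : ℝ} (hA : 0 ≤ A) :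
    ∫ v in Set.Ici A, |ψ v| ≤ (C1 / N) * (1 + A) ^ (-(N:ℝ)) := by
  have hplt : -((N:ℝ)+1) < -1 := by
    have : (1:ℝ) ≤ N := by exact_mod_cast hN
    linarith
  have hgint : Integrable (fun v : ℝ => C1 * (1 + |v|) ^ (-((N:ℝ)+1))) := by
    have : ((Module.finrank ℝ ℝ : ℝ)) < (N:ℝ)+1 := by
      simp [Module.finrank_self]
      exact_mod_cast hN
    exact (integrable_one_add_norm (E := ℝ) this).const_mul C1
  have hψint : Integrable (fun v : ℝ => |ψ v|) := by
    refine Integrable.mono' hgint hm.abs.aestronglyMeasurable ?_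
    filter_upwards with v
    rw [show ‖(|ψ v|)‖ = |(|ψ v|)| from rfl, _root_.abs_abs]
    exact hb v
  have step1 : ∫ v in Set.Ici A, |ψ v| ≤ ∫ v in Set.Ici A, C1 * (1 + |v|) ^ (-((N:ℝ)+1)) := by
    apply setIntegral_mono_on hψint.integrableOn hgint.integrableOn measurableSet_Ici
    intro v _
    exact hb v
  have step2 : ∫ v in Set.Ici A, C1 * (1 + |v|) ^ (-((N:ℝ)+1))
      = C1 * ∫ v in Set.Ici A, (1 + v) ^ (-((N:ℝ)+1)) := by
    rw [← integral_const_mul]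
    apply setIntegral_congr_fun measurableSet_Ici
    intro v hv
    simp only
    rw [_root_.abs_of_nonneg (le_trans hA hv)]
  have step3 : ∫ v in Set.Ici A, (1 + v) ^ (-((N:ℝ)+1))
      = ∫ w in Set.Ioi (1 + A), w ^ (-((N:ℝ)+1)) := by
    rw [MeasureTheory.integral_Ici_eq_integral_Ioi]
    have hmp : MeasureTheory.MeasurePreserving (fun v : ℝ => v + 1) volume volume :=
      measurePreserving_add_right volume 1
    have hemb : MeasurableEmbedding (fun v : ℝ => v + 1) :=
      (Homeomorph.addRight (1:ℝ)).measurableEmbedding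
    have hpre : (fun v : ℝ => v + 1) ⁻¹' (Set.Ioi (1 + A)) = Set.Ioi A := by
      ext v
      simp only [Set.mem_preimage, Set.mem_Ioi]
      constructor <;> intro hv <;> linarith
    have := hmp.setIntegral_preimage_emb hemb (fun w => w ^ (-((N:ℝ)+1))) (Set.Ioi (1 + A))
    rw [hpre] at this
    rw [← this]
    apply setIntegral_congr_fun measurableSet_Ioi
    intro v _
    simp only
    rw [add_comm 1 v]
  have step4 : ∫ w in Set.Ioi (1 + A), w ^ (-((N:ℝ)+1)) = (1 + A) ^ (-(N:ℝ)) / N := by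
    rw [integral_Ioi_rpow_of_lt hplt (by linarith)]
    have h1 : -((N:ℝ)+1) + 1 = -(N:ℝ) := by ring
    rw [h1]
    have hNpos : (0:ℝ) < N := by exact_mod_cast hN
    field_simp
  rw [step2, step3, step4] at step1
  calc ∫ v in Set.Ici A, |ψ v| ≤ C1 * ((1 + A) ^ (-(N:ℝ)) / N) := step1
    _ = (C1 / N) * (1 + A) ^ (-(N:ℝ)) := by ring
set_option maxHeartbeats 1000000

theorem stmt_3
    (η ε : ℝ) (hη : η ∈ Set.Ioo (0:ℝ) 1)
    (hε : ε ∈ Set.Ioo (0:ℝ) (min η (1 - η) / 10))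
    (φ : ℝ → ℝ) (hφ_smooth : ContDiff ℝ (⊤ : ℕ∞) φ) (hφ_supp : HasCompactSupport φ)
    (hφ_even : ∀ x, φ (-x) = φ x)
    (hφ_lower : ∀ x, Set.indicator (Set.Icc (-(1:ℝ)/2) (1/2)) (fun _ => (1:ℝ)) x ≤ φ x)
    (hφ_upper : ∀ x, φ x ≤ Set.indicator (Set.Icc (-(1:ℝ)) 1) (fun _ => (1:ℝ)) x)
    (h : ℝ → ℝ → ℝ)
    (hdef : ∀ lam : ℝ, 2 ≤ lam → ∀ τ : ℝ,
      h lam τ = (1 / Real.pi) * ∫ t : ℝ,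
        φ (t * lam ^ (1 - η - ε)) * (if t = 0 then lam else Real.sin (lam * t) / t)
          * Real.cos (t * τ))
    (N : ℕ) (hN : 1 ≤ N) :
    ∃ C : ℝ, 0 < C ∧ ∀ lam : ℝ, 2 ≤ lam → ∀ τ : ℝ, 0 < τ →
      |h lam τ - Set.indicator (Set.Icc (0:ℝ) lam) (fun _ => (1:ℝ)) τ|
        ≤ C * (1 + lam ^ (-1 + η + ε) * |τ - lam|) ^ (-(N : ℝ)) := by
  have hπ : (0:ℝ) < π := Real.pi_pos
  have hφc : Continuous φ := hφ_smooth.continuous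
  have hφ0 : φ 0 = 1 := by
    have h1 := hφ_lower 0
    have h2 := hφ_upper 0
    rw [Set.indicator_of_mem (by constructor <;> norm_num : (0:ℝ) ∈ Set.Icc (-(1:ℝ)/2) (1/2))] at h1
    rw [Set.indicator_of_mem (by constructor <;> norm_num : (0:ℝ) ∈ Set.Icc (-(1:ℝ)) 1)] at h2
    linarith
  set ψ : ℝ → ℝ := fun v => ∫ s, φ s * Real.cos (v * s) with hψdef
  have hψrel : ∀ v, ψ v = (𝓕 (fun x => (φ x : ℂ)) (v / (2 * π))).re :=
    fun v => aux_psi_rel hφc hφ_supp v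
  have hφcint : Integrable (fun x => (φ x : ℂ)) :=
    (Complex.continuous_ofReal.comp hφc).integrable_of_hasCompactSupport
      (hφ_supp.comp_left (g := Complex.ofReal) Complex.ofReal_zero)
  have hFcont : Continuous (𝓕 (fun x => (φ x : ℂ))) :=
    VectorFourier.fourierIntegral_continuous Real.continuous_fourierChar continuous_inner hφcint
  have hψc : Continuous ψ := by
    have : ψ = fun v => (𝓕 (fun x => (φ x : ℂ)) (v / (2 * π))).re := funext hψrel
    rw [this]
    exact Complex.continuous_re.comp (hFcont.comp (continuous_id.div_const _))
  obtain ⟨C0, hC0pos, hC0b⟩ := aux_decay hφ_smooth hφ_supp (N + 1)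
  set C1 : ℝ := (2 * π) ^ (N + 1) * C0 with hC1def
  have hC1pos : 0 < C1 := by positivity
  have heven : ∀ t : ℝ, ψ (-t) = ψ t := by
    intro t
    rw [hψdef]
    simp only
    apply integral_congr_ae
    filter_upwards with s
    rw [neg_mul, Real.cos_neg]
  have hψb : ∀ v : ℝ, |ψ v| ≤ C1 * (1 + |v|) ^ (-((N:ℝ)+1)) := by
    intro v
    set w := v / (2 * π) with hw
    have key1 : |ψ v| ≤ ‖𝓕 (fun x => (φ x : ℂ)) w‖ := by
      rw [hψrel v]
      exact Complex.abs_re_le_norm _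
    have hvw : |v| = (2 * π) * |w| := by
      rw [hw, abs_div, abs_of_pos (by positivity : (0:ℝ) < 2 * π)]
      field_simp
    have key2 : (1 + |v|) ≤ (2 * π) * (1 + |w|) := by
      rw [hvw]
      have : (1:ℝ) ≤ 2 * π := by nlinarith [Real.pi_gt_three]
      nlinarith [abs_nonneg w]
    have key3 : (1 + |v|) ^ (N + 1) ≤ (2 * π) ^ (N + 1) * (1 + |w|) ^ (N + 1) := by
      rw [← mul_pow]
      exact pow_le_pow_left₀ (by positivity) key2 _
    have key4 : |ψ v| * (1 + |v|) ^ (N + 1) ≤ C1 := by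
      calc |ψ v| * (1 + |v|) ^ (N + 1)
          ≤ ‖𝓕 (fun x => (φ x : ℂ)) w‖ * ((2 * π) ^ (N + 1) * (1 + |w|) ^ (N + 1)) := by
            apply mul_le_mul key1 key3 (by positivity) (norm_nonneg _)
        _ = (2 * π) ^ (N + 1) * ((1 + |w|) ^ (N + 1) * ‖𝓕 (fun x => (φ x : ℂ)) w‖) := by ring
        _ ≤ (2 * π) ^ (N + 1) * C0 := by
            have := hC0b w
            gcongr
        _ = C1 := by rw [hC1def]
    have hbase : (0:ℝ) < 1 + |v| := by positivity
    rw [show -((N:ℝ)+1) = -(((N+1 : ℕ)):ℝ) by push_cast; ring,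
      Real.rpow_neg hbase.le, Real.rpow_natCast]
    rw [mul_comm C1 _, ← div_eq_inv_mul, le_div_iff₀ (by positivity)]
    linarith [key4]
  have hψint : Integrable ψ := by
    have hr : ((Module.finrank ℝ ℝ : ℝ)) < (N:ℝ) + 1 := by
      simp [Module.finrank_self]
      exact_mod_cast hN
    refine Integrable.mono' ((integrable_one_add_norm (E := ℝ) hr).const_mul C1)
      hψc.aestronglyMeasurable ?_
    filter_upwards with v
    exact hψb v
  have habs_int : Integrable (fun v => |ψ v|) := hψint.abs
  have hψtot : ∫ v, ψ v = 2 * π := aux_psi_int hφ_smooth hφ_supp hφ0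
  have hIicIci : ∀ c : ℝ, ∫ x in Set.Iic c, |ψ x| = ∫ x in Set.Ici (-c), |ψ x| := by
    intro c
    have h1 := integral_comp_neg_Iic c (fun y => |ψ y|)
    have h2 : ∀ x : ℝ, |ψ (-x)| = |ψ x| := fun x => by rw [heven x]
    rw [MeasureTheory.integral_Ici_eq_integral_Ioi, ← h1]
    exact integral_congr_ae (by filter_upwards with x using by rw [h2])
  have tail : ∀ A : ℝ, 0 ≤ A → ∫ v in Set.Ici A, |ψ v| ≤ (C1 / N) * (1 + A) ^ (-(N:ℝ)) :=
    fun A hA => aux_tail hψc hC1pos hN hψb hA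
  refine ⟨C1 / (N * π) + 1, by positivity, fun lam hlam τ hτ => ?_⟩
  have hlam0 : (0:ℝ) < lam := by linarith
  set c : ℝ := lam ^ (1 - η - ε) with hcdef
  set δ : ℝ := lam ^ (-1 + η + ε) with hδdef
  set a : ℝ := lam ^ (η + ε) with hadef
  set b : ℝ := τ * δ with hbdef
  have hc0 : 0 < c := Real.rpow_pos_of_pos hlam0 _
  have hδ0 : 0 < δ := Real.rpow_pos_of_pos hlam0 _
  have ha0 : 0 < a := Real.rpow_pos_of_pos hlam0 _
  have hb0 : 0 < b := by positivity
  have hδc : δ = c⁻¹ := by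
    rw [hδdef, hcdef, show (-1 + η + ε) = -(1 - η - ε) by ring, Real.rpow_neg hlam0.le]
  have hca : c * a = lam := by
    rw [hcdef, hadef, ← Real.rpow_add hlam0]
    norm_num
  have hlamδ : lam * δ = a := by
    rw [hδdef, hadef]
    nth_rewrite 1 [show lam = lam ^ (1:ℝ) from (Real.rpow_one lam).symm]
    rw [← Real.rpow_add hlam0, show (1 + (-1 + η + ε)) = η + ε by ring]
  -- change of variables
  have stepA : (∫ t : ℝ, φ (t * c) * (if t = 0 then lam else Real.sin (lam * t) / t)
        * Real.cos (t * τ))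
      = ∫ s : ℝ, φ s * (if s = 0 then a else Real.sin (a * s) / s) * Real.cos (b * s) := by
    have hcinv : c⁻¹ ≠ 0 := by positivity
    have hsub := MeasureTheory.Measure.integral_comp_mul_left
      (fun t => φ (t * c) * (if t = 0 then lam else Real.sin (lam * t) / t) * Real.cos (t * τ))
      c⁻¹
    rw [inv_inv, abs_of_pos hc0] at hsub
    have hpt : ∀ x : ℝ, φ (c⁻¹ * x * c) * (if c⁻¹ * x = 0 then lam
          else Real.sin (lam * (c⁻¹ * x)) / (c⁻¹ * x)) * Real.cos (c⁻¹ * x * τ)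
        = c * (φ x * (if x = 0 then a else Real.sin (a * x) / x) * Real.cos (b * x)) := by
      intro x
      have hx1 : c⁻¹ * x * c = x := by field_simp
      have hx3 : c⁻¹ * x * τ = b * x := by
        rw [hbdef, hδc]
        ring
      rw [hx1, hx3]
      rcases eq_or_ne x 0 with rfl | hx
      · simp [← hca]
        ring
      · have hx0 : c⁻¹ * x ≠ 0 := by
          simp [hcinv, hx]
        rw [if_neg hx0, if_neg hx]
        have harg : lam * (c⁻¹ * x) = a * x := by
          rw [← hca]
          field_simp
        rw [harg]
        field_simp
    calc (∫ t : ℝ, φ (t * c) * (if t = 0 then lam else Real.sin (lam * t) / t)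
          * Real.cos (t * τ))
        = c⁻¹ • ∫ x : ℝ, φ (c⁻¹ * x * c) * (if c⁻¹ * x = 0 then lam
            else Real.sin (lam * (c⁻¹ * x)) / (c⁻¹ * x)) * Real.cos (c⁻¹ * x * τ) := by
          rw [hsub, smul_smul]
          simp [inv_mul_cancel₀ (ne_of_gt hc0)]
      _ = c⁻¹ • ∫ x : ℝ, c * (φ x * (if x = 0 then a else Real.sin (a * x) / x)
            * Real.cos (b * x)) := by
          rw [integral_congr_ae (Filter.Eventually.of_forall hpt)]
      _ = ∫ s : ℝ, φ s * (if s = 0 then a else Real.sin (a * s) / s) * Real.cos (b * s) := by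
          rw [integral_const_mul, smul_eq_mul]
          field_simp
          congr 1
          ext s
          rw [mul_comm s a, mul_comm s b]
  have stepB : h lam τ = (1 / (2 * π)) * ∫ u in (b - a)..(b + a), ψ u := by
    rw [hdef lam hlam τ, stepA, aux_core hφc hφ_supp hψc ha0]
    ring
  -- endpoints
  have hba1 : b - a = δ * (τ - lam) := by
    rw [hbdef, ← hlamδ]
    ring
  have hba2 : b + a = δ * (τ + lam) := by
    rw [hbdef, ← hlamδ]
    ring
  have hble : b - a ≤ b + a := by linarith
  have hIocInt : ∫ u in (b - a)..(b + a), ψ u = ∫ u in Set.Ioc (b - a) (b + a), ψ u :=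
    intervalIntegral.integral_of_le hble
  set T : ℝ := δ * |τ - lam| with hTdef
  have habsle : ∀ s : Set ℝ, |∫ u in s, ψ u| ≤ ∫ u in s, |ψ u| := by
    intro s
    have := MeasureTheory.norm_integral_le_integral_norm (μ := MeasureTheory.volume.restrict s) ψ
    simpa [Real.norm_eq_abs] using this
  have hT0 : 0 ≤ T := by positivity
  -- final bound in both cases
  rcases le_or_gt τ lam with hcase | hcase
  · -- τ ≤ lam : indicator is 1
    have hind : Set.indicator (Set.Icc (0:ℝ) lam) (fun _ => (1:ℝ)) τ = 1 :=
      Set.indicator_of_mem (Set.mem_Icc.mpr ⟨hτ.le, hcase⟩) _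
    have hsplit1 : (∫ u in Set.Ioc (b - a) (b + a), ψ u) + (∫ u in Set.Ioi (b + a), ψ u)
        = ∫ u in Set.Ioi (b - a), ψ u := by
      rw [← MeasureTheory.setIntegral_union (Set.Ioc_disjoint_Ioi le_rfl)
        measurableSet_Ioi hψint.integrableOn hψint.integrableOn,
        Set.Ioc_union_Ioi_eq_Ioi hble]
    have hsplit2 : (∫ u in Set.Iic (b - a), ψ u) + (∫ u in Set.Ioi (b - a), ψ u) = ∫ u, ψ u :=
      intervalIntegral.integral_Iic_add_Ioi hψint.integrableOn hψint.integrableOn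
    have hdiff : h lam τ - 1
        = -(1 / (2 * π)) * ((∫ u in Set.Iic (b - a), ψ u) + ∫ u in Set.Ioi (b + a), ψ u) := by
      have key : ∫ u in Set.Ioc (b - a) (b + a), ψ u
          = 2 * π - ((∫ u in Set.Iic (b - a), ψ u) + ∫ u in Set.Ioi (b + a), ψ u) := by
        have h3 := hψtot
        linarith [hsplit1, hsplit2]
      rw [stepB, hIocInt, key]
      field_simp
      ring
    have hAeq : -(b - a) = T := by
      rw [hba1, hTdef, abs_of_nonpos (by linarith), ← neg_mul]
      ring
    have ht1 : |∫ u in Set.Iic (b - a), ψ u| ≤ (C1 / N) * (1 + T) ^ (-(N:ℝ)) := by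
      calc |∫ u in Set.Iic (b - a), ψ u| ≤ ∫ u in Set.Iic (b - a), |ψ u| :=
            habsle _
        _ = ∫ u in Set.Ici (-(b - a)), |ψ u| := hIicIci _
        _ = ∫ u in Set.Ici T, |ψ u| := by rw [hAeq]
        _ ≤ (C1 / N) * (1 + T) ^ (-(N:ℝ)) := tail T hT0
    have ht2 : |∫ u in Set.Ioi (b + a), ψ u| ≤ (C1 / N) * (1 + T) ^ (-(N:ℝ)) := by
      have hsub : Set.Ioi (b + a) ⊆ Set.Ici T := by
        intro x hx
        rw [← hAeq]
        simp only [Set.mem_Ioi] at hx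
        simp only [Set.mem_Ici]
        linarith
      calc |∫ u in Set.Ioi (b + a), ψ u| ≤ ∫ u in Set.Ioi (b + a), |ψ u| :=
            habsle _
        _ ≤ ∫ u in Set.Ici T, |ψ u| := by
            apply setIntegral_mono_set habs_int.integrableOn
              (by filter_upwards with x using abs_nonneg _)
              (HasSubset.Subset.eventuallyLE hsub)
        _ ≤ (C1 / N) * (1 + T) ^ (-(N:ℝ)) := tail T hT0
    rw [hind, hdiff]
    have hb2π : (0:ℝ) < 1 / (2 * π) := by positivity
    calc |(-(1 / (2 * π))) * ((∫ u in Set.Iic (b - a), ψ u) + ∫ u in Set.Ioi (b + a), ψ u)|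
        = (1 / (2 * π)) * |(∫ u in Set.Iic (b - a), ψ u) + ∫ u in Set.Ioi (b + a), ψ u| := by
          rw [abs_mul, abs_neg, abs_of_pos hb2π]
      _ ≤ (1 / (2 * π)) * (|∫ u in Set.Iic (b - a), ψ u| + |∫ u in Set.Ioi (b + a), ψ u|) := by
          gcongr
          exact abs_add_le _ _
      _ ≤ (1 / (2 * π)) * ((C1 / N) * (1 + T) ^ (-(N:ℝ)) + (C1 / N) * (1 + T) ^ (-(N:ℝ))) := by
          gcongr
      _ = (C1 / (N * π)) * (1 + T) ^ (-(N:ℝ)) := by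
          ring
      _ ≤ (C1 / (N * π) + 1) * (1 + T) ^ (-(N:ℝ)) := by
          have hX : (0:ℝ) ≤ (1 + T) ^ (-(N:ℝ)) := (Real.rpow_pos_of_pos (by linarith) _).le
          exact mul_le_mul_of_nonneg_right (by linarith) hX
  · -- lam < τ : indicator is 0
    have hind : Set.indicator (Set.Icc (0:ℝ) lam) (fun _ => (1:ℝ)) τ = 0 :=
      Set.indicator_of_notMem (fun hmem => absurd hmem.2 (not_le.2 hcase)) _
    have hAeq : b - a = T := by
      rw [hba1, hTdef, abs_of_pos (by linarith)]
    have hbnd : |h lam τ| ≤ (1 / (2 * π)) * ((C1 / N) * (1 + T) ^ (-(N:ℝ))) := by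
      rw [stepB, hIocInt]
      have hsub : Set.Ioc (b - a) (b + a) ⊆ Set.Ici T := by
        intro x hx
        rw [← hAeq]
        exact le_of_lt hx.1
      have hb2π : (0:ℝ) < 1 / (2 * π) := by positivity
      calc |(1 / (2 * π)) * ∫ u in Set.Ioc (b - a) (b + a), ψ u|
          = (1 / (2 * π)) * |∫ u in Set.Ioc (b - a) (b + a), ψ u| := by
            rw [abs_mul, abs_of_pos hb2π]
        _ ≤ (1 / (2 * π)) * ∫ u in Set.Ioc (b - a) (b + a), |ψ u| := by
            gcongr
            exact habsle _
        _ ≤ (1 / (2 * π)) * ∫ u in Set.Ici T, |ψ u| := by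
            exact mul_le_mul_of_nonneg_left (setIntegral_mono_set habs_int.integrableOn
              (by filter_upwards with x using abs_nonneg _)
              (HasSubset.Subset.eventuallyLE hsub)) hb2π.le
        _ ≤ (1 / (2 * π)) * ((C1 / N) * (1 + T) ^ (-(N:ℝ))) := by
            gcongr
            exact tail T hT0
    rw [hind, sub_zero]
    have hX : (0:ℝ) ≤ (1 + T) ^ (-(N:ℝ)) := (Real.rpow_pos_of_pos (by linarith) _).le
    have hNpos : (0:ℝ) < (N:ℝ) := by exact_mod_cast hN
    calc |h lam τ| ≤ (1 / (2 * π)) * ((C1 / N) * (1 + T) ^ (-(N:ℝ))) := hbnd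
      _ = (C1 / ((N:ℝ) * (2 * π))) * (1 + T) ^ (-(N:ℝ)) := by ring
      _ ≤ (C1 / (N * π) + 1) * (1 + T) ^ (-(N:ℝ)) := by
          apply mul_le_mul_of_nonneg_right _ hX
          have hstep : C1 / ((N:ℝ) * (2 * π)) ≤ C1 / ((N:ℝ) * π) := by
            gcongr
            nlinarith
          linarith
end

section
/- Let n ≥ 2 be an integer and 0 < η < 1. There exists a constant c > 0 such that for every real λ ≥ 2, Σ_{j∈ℤⁿ, |j|<λ} Σ_{k∈ℤⁿ, |k|≥λ} (1+|k−j|)^{−n+2−η} / (|k|² − |j|²) ≥ c·λ^{n−η}, where the double sum of nonnegative terms is taken in the extended nonnegative reals [0, ∞]. -/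
/-!
Only the pairs with `j` in a cube of side `≈ λ/√n` at the origin (so `|j| < λ`) and `k` in the
cube `[⌈λ⌉, 2⌈λ⌉)ⁿ` (so `λ ≤ |k| ≲ λ`) are kept. There are `≳ λ²ⁿ` such pairs, and for each of them
`|k - j| ≲ λ` and `|k|² - |j|² ≲ λ²`; since the exponent `-n + 2 - η` is negative, every summand
is `≳ λ^(-n + 2 - η) / λ²`. Multiplying gives `λ^(n - η)`.
-/

open Finset

/-- Euclidean norm of a lattice point in `ℤⁿ`, regarded as a point of `ℝⁿ`. -/
noncomputable def znorm {n : ℕ} (j : Fin n → ℤ) : ℝ := Real.sqrt (∑ i, ((j i : ℝ)) ^ 2)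

theorem ENNReal.card_mul_card_mul_le_tsum_tsum {α β : Type*} (f : α → β → ENNReal)
    (s : Finset α) (t : Finset β) {a : ENNReal} (h : ∀ i ∈ s, ∀ j ∈ t, a ≤ f i j) :
    (#s * #t : ENNReal) * a ≤ ∑' i, ∑' j, f i j :=
  calc (#s * #t : ENNReal) * a = ∑ i ∈ s, ∑ j ∈ t, a := by simp [mul_assoc]
    _ ≤ ∑ i ∈ s, ∑ j ∈ t, f i j := sum_le_sum fun i hi => sum_le_sum fun j hj => h i hi j hj
    _ ≤ ∑ i ∈ s, ∑' j, f i j := sum_le_sum fun i _ => ENNReal.sum_le_tsum t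
    _ ≤ ∑' i, ∑' j, f i j := ENNReal.sum_le_tsum s

section znorm

variable {n : ℕ}

theorem znorm_nonneg (j : Fin n → ℤ) : 0 ≤ znorm j := Real.sqrt_nonneg _

theorem znorm_sq (j : Fin n → ℤ) : znorm j ^ 2 = ∑ i, (j i : ℝ) ^ 2 :=
  Real.sq_sqrt (by positivity)

theorem abs_le_znorm (j : Fin n → ℤ) (i : Fin n) : |(j i : ℝ)| ≤ znorm j :=
  Real.abs_le_sqrt <|
    single_le_sum (f := fun i => (j i : ℝ) ^ 2) (fun _ _ => sq_nonneg _) (mem_univ i)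

theorem znorm_sq_le {j : Fin n → ℤ} {a : ℝ} (h : ∀ i, |(j i : ℝ)| ≤ a) :
    znorm j ^ 2 ≤ n * a ^ 2 := by
  rw [znorm_sq]
  simpa using sum_le_card_nsmul univ (fun i => (j i : ℝ) ^ 2) (a ^ 2)
    fun i _ => sq_le_sq.2 ((h i).trans (le_abs_self a))

theorem znorm_sq_lt (hn : 0 < n) {j : Fin n → ℤ} {a : ℝ} (h : ∀ i, |(j i : ℝ)| < a) :
    znorm j ^ 2 < n * a ^ 2 := by
  have : Nonempty (Fin n) := ⟨⟨0, hn⟩⟩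
  rw [znorm_sq]
  simpa using sum_lt_sum_of_nonempty (f := fun i => (j i : ℝ) ^ 2) (g := fun _ => a ^ 2)
    univ_nonempty fun i _ => sq_lt_sq.2 ((h i).trans_le (le_abs_self a))

end znorm

noncomputable def cube (n : ℕ) (a b : ℤ) : Finset (Fin n → ℤ) := Fintype.piFinset fun _ => Ico a b

theorem mem_cube {n : ℕ} {a b : ℤ} {j : Fin n → ℤ} : j ∈ cube n a b ↔ ∀ i, a ≤ j i ∧ j i < b := by
  simp [cube]

theorem card_cube (n : ℕ) (a b : ℤ) : #(cube n a b) = (b - a).toNat ^ n := by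
  simp [cube]

theorem coord_lt_of_mem_cube_zero_ceil {n : ℕ} {a : ℝ} (ha : 0 ≤ a) {j : Fin n → ℤ}
    (hj : j ∈ cube n 0 ⌈a⌉₊) (i : Fin n) : 0 ≤ (j i : ℝ) ∧ (j i : ℝ) < a := by
  obtain ⟨h0, hM⟩ := mem_cube.1 hj i
  have hceil := Nat.ceil_lt_add_one ha
  have : (j i : ℝ) + 1 ≤ ⌈a⌉₊ := by exact_mod_cast hM
  exact ⟨by exact_mod_cast h0, by linarith⟩

theorem coord_lt_of_mem_cube_ceil_two_mul_ceil {n : ℕ} {a : ℝ} (ha : 0 ≤ a) {k : Fin n → ℤ}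
    (hk : k ∈ cube n ⌈a⌉₊ (2 * ⌈a⌉₊)) (i : Fin n) : a ≤ (k i : ℝ) ∧ (k i : ℝ) < 2 * a + 1 := by
  obtain ⟨hN, h2N⟩ := mem_cube.1 hk i
  have hceil := Nat.ceil_lt_add_one ha
  have h1 : (⌈a⌉₊ : ℝ) ≤ k i := by exact_mod_cast hN
  have h2 : (k i : ℝ) + 1 ≤ 2 * ⌈a⌉₊ := by exact_mod_cast h2N
  exact ⟨(Nat.le_ceil a).trans h1, by linarith⟩

noncomputable def summand (n : ℕ) (η lam : ℝ) (j k : Fin n → ℤ) : ENNReal :=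
  if znorm j < lam ∧ lam ≤ znorm k then
    ENNReal.ofReal ((1 + znorm (k - j)) ^ (-(n : ℝ) + 2 - η) / (znorm k ^ 2 - znorm j ^ 2))
  else 0

section summand

variable {n : ℕ} {η lam : ℝ}

theorem ofReal_le_summand (hn : 0 < n) (he : -(n : ℝ) + 2 - η ≤ 0) (hlam : 1 ≤ lam)
    {j k : Fin n → ℤ} (hj : j ∈ cube n 0 ⌈lam / √n⌉₊) (hk : k ∈ cube n ⌈lam⌉₊ (2 * ⌈lam⌉₊)) :
    ENNReal.ofReal ((4 * √n * lam) ^ (-(n : ℝ) + 2 - η) / (9 * n * lam ^ 2)) ≤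
      summand n η lam j k := by
  have hs : 1 ≤ √n := Real.one_le_sqrt.2 (by exact_mod_cast hn)
  have hj_coord i := coord_lt_of_mem_cube_zero_ceil (by positivity) hj i
  have hk_coord i : lam ≤ (k i : ℝ) ∧ (k i : ℝ) ≤ 3 * lam := by
    obtain ⟨h1, h2⟩ := coord_lt_of_mem_cube_ceil_two_mul_ceil (by positivity) hk i
    exact ⟨h1, by linarith⟩
  have hj_lt : znorm j < lam := by
    refine lt_of_pow_lt_pow_left₀ 2 (by positivity) ?_
    calc znorm j ^ 2 < n * (lam / √n) ^ 2 := znorm_sq_lt hn fun i => by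
          rw [abs_of_nonneg (hj_coord i).1]; exact (hj_coord i).2
      _ = lam ^ 2 := by rw [div_pow, Real.sq_sqrt (Nat.cast_nonneg n)]; field_simp
  have hk_ge : lam ≤ znorm k :=
    (hk_coord ⟨0, hn⟩).1.trans ((le_abs_self _).trans (abs_le_znorm k _))
  have hk_sq : znorm k ^ 2 ≤ 9 * n * lam ^ 2 := by
    have := znorm_sq_le (j := k) fun i => by
      rw [abs_of_nonneg (by linarith [(hk_coord i).1])]; exact (hk_coord i).2
    linarith
  have hj_le : lam / √n ≤ lam := div_le_self (by linarith) hs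
  have hkj : znorm (k - j) ≤ 3 * √n * lam := by
    refine le_of_pow_le_pow_left₀ two_ne_zero (by positivity) ?_
    calc znorm (k - j) ^ 2 ≤ n * (3 * lam) ^ 2 := znorm_sq_le fun i => by
          rw [Pi.sub_apply, Int.cast_sub]
          exact abs_sub_le_of_nonneg_of_le (by linarith [(hk_coord i).1]) (hk_coord i).2
            (hj_coord i).1 (by linarith [(hj_coord i).2])
      _ = (3 * √n * lam) ^ 2 := by simp only [mul_pow, Real.sq_sqrt (Nat.cast_nonneg n)]; ring
  have hD : 0 < znorm k ^ 2 - znorm j ^ 2 := by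
    nlinarith [znorm_nonneg j]
  have hd : 0 < 1 + znorm (k - j) := by linarith [znorm_nonneg (k - j)]
  rw [summand, if_pos ⟨hj_lt, hk_ge⟩]
  refine ENNReal.ofReal_le_ofReal (div_le_div₀ (by positivity) ?_ hD (by nlinarith))
  exact Real.rpow_le_rpow_of_nonpos hd (by nlinarith) he

theorem pow_mul_pow_le_card_mul_card (hlam : 0 ≤ lam) :
    (lam / √n) ^ n * lam ^ n ≤
      ((#(cube n 0 ⌈lam / √n⌉₊) * #(cube n ⌈lam⌉₊ (2 * ⌈lam⌉₊)) : ℕ) : ℝ) := by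
  simp only [card_cube, Nat.cast_mul, Nat.cast_pow]
  have h2 : (2 * ⌈lam⌉₊ : ℤ) - ⌈lam⌉₊ = ⌈lam⌉₊ := by ring
  rw [sub_zero, h2, Int.toNat_natCast, Int.toNat_natCast]
  gcongr <;> exact Nat.le_ceil _

theorem ofReal_le_tsum_tsum_summand (hn : 0 < n) (he : -(n : ℝ) + 2 - η ≤ 0) (hlam : 1 ≤ lam) :
    ENNReal.ofReal ((lam / √n) ^ n * lam ^ n *
        ((4 * √n * lam) ^ (-(n : ℝ) + 2 - η) / (9 * n * lam ^ 2))) ≤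
      ∑' j, ∑' k, summand n η lam j k := by
  rw [ENNReal.ofReal_mul (by positivity)]
  refine le_trans ?_ (ENNReal.card_mul_card_mul_le_tsum_tsum _ _ _
    fun j hj k hk => ofReal_le_summand hn he hlam hj hk)
  gcongr
  exact_mod_cast (ENNReal.ofReal_le_ofReal (pow_mul_pow_le_card_mul_card (by linarith))).trans
    (ENNReal.ofReal_natCast _).le

end summand

theorem stmt_8 (n : ℕ) (hn : 2 ≤ n) (η : ℝ) (hη : η ∈ Set.Ioo (0:ℝ) 1) :
    ∃ c : ℝ, 0 < c ∧ ∀ lam : ℝ, 2 ≤ lam →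
      ENNReal.ofReal (c * lam ^ ((n : ℝ) - η)) ≤
        ∑' j : Fin n → ℤ, ∑' k : Fin n → ℤ,
          if znorm j < lam ∧ lam ≤ znorm k then
            ENNReal.ofReal
              ((1 + znorm (k - j)) ^ (-(n : ℝ) + 2 - η) / (znorm k ^ 2 - znorm j ^ 2))
          else 0 := by
  have hn' : (2 : ℝ) ≤ n := by exact_mod_cast hn
  have he : -(n : ℝ) + 2 - η ≤ 0 := by linarith [hη.1]
  refine ⟨(4 * √n) ^ (-(n : ℝ) + 2 - η) / (9 * n * √n ^ n), by positivity, fun lam hlam => ?_⟩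
  have hlam0 : 0 < lam := by linarith
  have hexp : lam ^ n * lam ^ n * lam ^ (-(n : ℝ) + 2 - η) = lam ^ ((n : ℝ) - η) * lam ^ 2 := by
    simp only [← Real.rpow_natCast, ← Real.rpow_add hlam0]
    ring_nf
  have hconst : (4 * √n) ^ (-(n : ℝ) + 2 - η) / (9 * n * √n ^ n) * lam ^ ((n : ℝ) - η) =
      (lam / √n) ^ n * lam ^ n * ((4 * √n * lam) ^ (-(n : ℝ) + 2 - η) / (9 * n * lam ^ 2)) := by
    rw [Real.mul_rpow (by positivity) hlam0.le, div_pow]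
    field_simp
    rw [← hexp]
    ring
  rw [hconst]
  exact ofReal_le_tsum_tsum_summand (by omega) he (by linarith)
end

section
/- Let n ≥ 1 be an integer. There exists a constant C > 0, depending only on n, such that for every x₀ ∈ ℝⁿ, every ρ ≥ 0, every w ≥ 0 and every R ≥ 1, the number of lattice points k ∈ ℤⁿ with ρ ≤ |k| ≤ ρ + w and |k − x₀| ≤ R is at most C · R^{n−1} · (w + 1). -/
/-- Euclidean norm of a vector in `ℝⁿ` (modeled as `Fin n → ℝ`). -/
noncomputable def rNorm {n : ℕ} (x : Fin n → ℝ) : ℝ := Real.sqrt (∑ i, (x i) ^ 2)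


/-- Count integers in a real interval. -/
lemma count_Icc_real (G : Finset ℤ) (α β : ℝ) (h : ∀ k ∈ G, α ≤ (k:ℝ) ∧ (k:ℝ) ≤ β) :
    (G.card : ℝ) ≤ max (β - α + 1) 0 := by
  have hsub : G ⊆ Finset.Icc ⌈α⌉ ⌊β⌋ := by
    intro k hk
    obtain ⟨h1, h2⟩ := h k hk
    simp only [Finset.mem_Icc]
    exact ⟨Int.ceil_le.2 h1, Int.le_floor.2 h2⟩
  have hcard := Finset.card_le_card hsub
  rw [Int.card_Icc] at hcard
  calc (G.card : ℝ) ≤ ((⌊β⌋ + 1 - ⌈α⌉).toNat : ℝ) := by exact_mod_cast hcard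
    _ ≤ max (β - α + 1) 0 := by
        rcases le_or_gt (⌊β⌋ + 1 - ⌈α⌉) 0 with h0 | h0
        · simp [Int.toNat_of_nonpos h0]
        · have h3 := Int.toNat_of_nonneg h0.le
          have h1 : (⌊β⌋:ℝ) ≤ β := Int.floor_le β
          have h2 : α ≤ (⌈α⌉:ℝ) := Int.le_ceil α
          refine le_max_of_le_left ?_
          have h4 : (((⌊β⌋ + 1 - ⌈α⌉).toNat : ℤ) : ℝ) = ((⌊β⌋:ℝ) + 1 - (⌈α⌉:ℝ)) := by
            rw [h3]; push_cast; ring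
          push_cast at h4 ⊢
          linarith

set_option maxHeartbeats 800000 in
lemma annulus_count (n : ℕ) (hn : 1 ≤ n) (ρ w s : ℝ) (hρ : 0 ≤ ρ) (hw : 0 ≤ w) (hs : 0 ≤ s)
    (G : Finset ℤ)
    (hG : ∀ k ∈ G, ρ^2 ≤ (k:ℝ)^2 + s ∧ (k:ℝ)^2 + s ≤ (ρ+w)^2 ∧ ρ^2 ≤ (n:ℝ) * (k:ℝ)^2) :
    (G.card : ℝ) ≤ 4*(n:ℝ)*w + 2 := by
  classical
  have hn1 : (1:ℝ) ≤ (n:ℝ) := by exact_mod_cast hn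
  rcases G.eq_empty_or_nonempty with rfl | ⟨k₀, hk₀⟩
  · simp; positivity
  have hsle : s ≤ (ρ+w)^2 := by
    have := (hG k₀ hk₀).2.1
    nlinarith [sq_nonneg ((k₀:ℝ))]
  obtain ⟨β, hβ⟩ : ∃ β, β = Real.sqrt ((ρ+w)^2 - s) := ⟨_, rfl⟩
  obtain ⟨α, hα⟩ : ∃ α, α = Real.sqrt (max (ρ^2 - s) (ρ^2/n)) := ⟨_, rfl⟩
  have hβ0 : 0 ≤ β := hβ ▸ Real.sqrt_nonneg _
  have hα0 : 0 ≤ α := hα ▸ Real.sqrt_nonneg _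
  have hmax0 : 0 ≤ max (ρ^2 - s) (ρ^2/n) := le_trans (by positivity) (le_max_right _ _)
  have hβsq : β^2 = (ρ+w)^2 - s := by rw [hβ]; exact Real.sq_sqrt (by linarith)
  have hαsq : α^2 = max (ρ^2 - s) (ρ^2/n) := by rw [hα]; exact Real.sq_sqrt hmax0
  have hα2a : ρ^2 - s ≤ α^2 := hαsq ▸ le_max_left _ _
  have hα2b : ρ^2/n ≤ α^2 := hαsq ▸ le_max_right _ _
  have hdiff : β^2 - α^2 ≤ 2*ρ*w + w^2 := by nlinarith
  have hkey : β - α ≤ 2*(n:ℝ)*w := by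
    rcases le_or_gt ρ w with hc | hc
    · have hβle : β ≤ ρ + w := by
        rw [hβ]
        calc Real.sqrt ((ρ+w)^2 - s) ≤ Real.sqrt ((ρ+w)^2) := Real.sqrt_le_sqrt (by linarith)
          _ = ρ + w := Real.sqrt_sq (by linarith)
      nlinarith
    · have hρ0 : 0 < ρ := lt_of_le_of_lt hw hc
      have hnα : ρ^2 ≤ (n:ℝ) * α^2 := by
        have h := hα2b
        rw [div_le_iff₀ (by linarith)] at h
        linarith
      rcases le_or_gt β α with hba | hba
      · nlinarith
      · have hαpos : 0 < α := by
          rcases eq_or_lt_of_le hα0 with h0 | h0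
          · exfalso
            have hz : α^2 = 0 := by rw [← h0]; ring
            rw [hz] at hnα
            nlinarith
          · exact h0
        rcases eq_or_lt_of_le hw with hw0 | hw0
        · -- w = 0
          have : β^2 ≤ α^2 := by nlinarith
          nlinarith [sq_nonneg (β - α), sq_nonneg (β + α)]
        · have hn0 : (0:ℝ) ≤ (n:ℝ) := le_trans zero_le_one hn1
          have hsq9 : (3*ρ)^2 ≤ (4*(n:ℝ)*α)^2 := by
            nlinarith [mul_nonneg (mul_nonneg (sub_nonneg.2 hn1) hn0) (sq_nonneg α),
              mul_nonneg hn0 (sq_nonneg α)]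
          have hρα : 3*ρ ≤ 4*(n:ℝ)*α := by
            calc 3*ρ = Real.sqrt ((3*ρ)^2) := (Real.sqrt_sq (by positivity)).symm
              _ ≤ Real.sqrt ((4*(n:ℝ)*α)^2) := Real.sqrt_le_sqrt hsq9
              _ = 4*(n:ℝ)*α := Real.sqrt_sq (by positivity)
          have h5 : (β - α)*(2*α) ≤ 4*(n:ℝ)*α*w := by nlinarith
          nlinarith [mul_pos hαpos hw0]
  have hsplit : G ⊆ G.filter (fun k => 0 ≤ k) ∪ G.filter (fun k => k < 0) := by
    intro k hk
    rcases le_or_gt 0 k with h | h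
    · exact Finset.mem_union_left _ (Finset.mem_filter.2 ⟨hk, h⟩)
    · exact Finset.mem_union_right _ (Finset.mem_filter.2 ⟨hk, h⟩)
  have hcards : G.card ≤ (G.filter (fun k => 0 ≤ k)).card + (G.filter (fun k => k < 0)).card :=
    le_trans (Finset.card_le_card hsplit) (Finset.card_union_le _ _)
  have hup : ∀ k ∈ G, (k:ℝ)^2 ≤ β^2 := fun k hk => by
    have := (hG k hk).2.1; linarith
  have hlo : ∀ k ∈ G, α^2 ≤ (k:ℝ)^2 := by
    intro k hk
    obtain ⟨h1, h2, h3⟩ := hG k hk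
    rw [hαsq, max_le_iff]
    refine ⟨by linarith, ?_⟩
    rw [div_le_iff₀ (by linarith)]
    nlinarith
  have hpos : ((G.filter (fun k => 0 ≤ k)).card : ℝ) ≤ 2*(n:ℝ)*w + 1 := by
    have hcc := count_Icc_real (G.filter (fun k => 0 ≤ k)) α β ?_
    · refine le_trans hcc (max_le (by linarith) (by positivity))
    · intro k hk
      rw [Finset.mem_filter] at hk
      have hk0 : (0:ℝ) ≤ (k:ℝ) := by exact_mod_cast hk.2
      constructor
      · calc α = Real.sqrt (α^2) := (Real.sqrt_sq hα0).symm
          _ ≤ Real.sqrt ((k:ℝ)^2) := Real.sqrt_le_sqrt (hlo k hk.1)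
          _ = (k:ℝ) := Real.sqrt_sq hk0
      · calc (k:ℝ) = Real.sqrt ((k:ℝ)^2) := (Real.sqrt_sq hk0).symm
          _ ≤ Real.sqrt (β^2) := Real.sqrt_le_sqrt (hup k hk.1)
          _ = β := Real.sqrt_sq hβ0
  have hneg : ((G.filter (fun k => k < 0)).card : ℝ) ≤ 2*(n:ℝ)*w + 1 := by
    have hcc := count_Icc_real (G.filter (fun k => k < 0)) (-β) (-α) ?_
    · refine le_trans hcc (max_le (by linarith) (by positivity))
    · intro k hk
      rw [Finset.mem_filter] at hk
      have hk0 : (k:ℝ) ≤ 0 := by exact_mod_cast hk.2.le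
      have hk0' : (0:ℝ) ≤ -(k:ℝ) := by linarith
      have hsq : (-(k:ℝ))^2 = (k:ℝ)^2 := by ring
      constructor
      · have h6 : -(k:ℝ) ≤ β := by
          calc -(k:ℝ) = Real.sqrt ((-(k:ℝ))^2) := (Real.sqrt_sq hk0').symm
            _ = Real.sqrt ((k:ℝ)^2) := by rw [hsq]
            _ ≤ Real.sqrt (β^2) := Real.sqrt_le_sqrt (hup k hk.1)
            _ = β := Real.sqrt_sq hβ0
        linarith
      · have h7 : α ≤ -(k:ℝ) := by
          calc α = Real.sqrt (α^2) := (Real.sqrt_sq hα0).symm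
            _ ≤ Real.sqrt ((k:ℝ)^2) := Real.sqrt_le_sqrt (hlo k hk.1)
            _ = Real.sqrt ((-(k:ℝ))^2) := by rw [hsq]
            _ = -(k:ℝ) := Real.sqrt_sq hk0'
        linarith
  calc (G.card : ℝ)
      ≤ ((G.filter (fun k => 0 ≤ k)).card : ℝ) + ((G.filter (fun k => k < 0)).card : ℝ) := by
        exact_mod_cast hcards
    _ ≤ (2*(n:ℝ)*w + 1) + (2*(n:ℝ)*w + 1) := add_le_add hpos hneg
    _ = 4*(n:ℝ)*w + 2 := by ring

set_option maxHeartbeats 1000000 in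
theorem stmt_15 (n : ℕ) (hn : 1 ≤ n) :
    ∃ C : ℝ, 0 < C ∧ ∀ (x₀ : Fin n → ℝ) (ρ w R : ℝ), 0 ≤ ρ → 0 ≤ w → 1 ≤ R →
      (Set.ncard {k : Fin n → ℤ | ρ ≤ znorm k ∧ znorm k ≤ ρ + w ∧
          rNorm (fun i => (k i : ℝ) - x₀ i) ≤ R} : ℝ)
        ≤ C * R ^ ((n : ℝ) - 1) * (w + 1) := by
  obtain ⟨m, rfl⟩ : ∃ m, n = m + 1 := ⟨n - 1, (Nat.succ_pred_eq_of_pos hn).symm⟩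
  classical
  refine ⟨((4*((m:ℝ)+1)+2) * ((m:ℝ)+1) * 7^m : ℝ), by positivity, ?_⟩
  intro x₀ ρ w R hρ hw hR
  have hR0 : (0:ℝ) < R := lt_of_lt_of_le zero_lt_one hR
  have hrpow : R ^ (((m+1:ℕ):ℝ) - 1) = R ^ (m:ℕ) := by
    rw [show (((m+1:ℕ)):ℝ) - 1 = ((m:ℕ):ℝ) by push_cast; ring, Real.rpow_natCast]
  rw [hrpow]
  set S := {k : Fin (m+1) → ℤ | ρ ≤ znorm k ∧ znorm k ≤ ρ + w ∧
      rNorm (fun i => (k i : ℝ) - x₀ i) ≤ R} with hSdef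
  -- basic membership consequences
  have hSmem : ∀ k ∈ S, ρ^2 ≤ (∑ i, ((k i:ℝ))^2) ∧ (∑ i, ((k i:ℝ))^2) ≤ (ρ+w)^2 ∧
      (∑ i, ((k i:ℝ) - x₀ i)^2) ≤ R^2 := by
    intro k hk
    obtain ⟨h1, h2, h3⟩ := hk
    have hz0 : (0:ℝ) ≤ ∑ i, ((k i:ℝ))^2 := by positivity
    have hr0 : (0:ℝ) ≤ ∑ i, ((k i:ℝ) - x₀ i)^2 := by positivity
    refine ⟨?_, ?_, ?_⟩
    · have h4 := pow_le_pow_left₀ hρ h1 2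
      rwa [znorm, Real.sq_sqrt hz0] at h4
    · have h4 : znorm k ^ 2 ≤ (ρ+w)^2 := pow_le_pow_left₀ (Real.sqrt_nonneg _) h2 2
      rwa [znorm, Real.sq_sqrt hz0] at h4
    · have h4 : rNorm (fun i => (k i:ℝ) - x₀ i) ^ 2 ≤ R^2 :=
        pow_le_pow_left₀ (Real.sqrt_nonneg _) h3 2
      rwa [rNorm, Real.sq_sqrt hr0] at h4
  have hcoord : ∀ k ∈ S, ∀ j, |(k j : ℝ) - x₀ j| ≤ R := by
    intro k hk j
    have h3 := (hSmem k hk).2.2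
    have hsingle : ((k j:ℝ) - x₀ j)^2 ≤ R^2 :=
      le_trans (Finset.single_le_sum (f := fun i => ((k i:ℝ) - x₀ i)^2)
        (fun i _ => sq_nonneg _) (Finset.mem_univ j)) h3
    calc |(k j:ℝ) - x₀ j| = Real.sqrt (((k j:ℝ) - x₀ j)^2) := (Real.sqrt_sq_eq_abs _).symm
      _ ≤ Real.sqrt (R^2) := Real.sqrt_le_sqrt hsingle
      _ = R := Real.sqrt_sq hR0.le
  -- finiteness
  have hfin : S.Finite := by
    apply Set.Finite.subset
      (Finset.finite_toSet (Fintype.piFinset fun j : Fin (m+1) => Finset.Icc ⌈x₀ j - R⌉ ⌊x₀ j + R⌋))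
    intro k hk
    simp only [Finset.mem_coe, Fintype.mem_piFinset, Finset.mem_Icc]
    intro j
    have hj := hcoord k hk j
    rw [abs_le] at hj
    exact ⟨Int.ceil_le.2 (by linarith [hj.1]), Int.le_floor.2 (by linarith [hj.2])⟩
  set T := hfin.toFinset with hTdef
  have hT : ∀ k, k ∈ T ↔ k ∈ S := fun k => hfin.mem_toFinset
  -- max index
  have hex : ∀ k : Fin (m+1) → ℤ, ∃ i, ∀ j, |k j| ≤ |k i| := fun k => by
    obtain ⟨i, -, hi⟩ := Finset.exists_max_image Finset.univ (fun j => |k j|) ⟨0, Finset.mem_univ 0⟩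
    exact ⟨i, fun j => hi j (Finset.mem_univ j)⟩
  choose imax himax using hex
  obtain ⟨f, hfdef⟩ : ∃ f : (Fin (m+1) → ℤ) → Fin (m+1) × (Fin m → ℤ),
      f = fun k => (imax k, fun j => k ((imax k).succAbove j) - ⌈x₀ ((imax k).succAbove j)⌉) :=
    ⟨_, rfl⟩
  -- image bound
  set A : Finset (Fin (m+1) × (Fin m → ℤ)) :=
    Finset.univ ×ˢ Fintype.piFinset (fun _ : Fin m => Finset.Icc (-(⌈R⌉+1)) (⌈R⌉+1)) with hA
  have himg : T.image f ⊆ A := by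
    intro v hv
    rw [Finset.mem_image] at hv
    obtain ⟨k, hkT, rfl⟩ := hv
    have hkS : k ∈ S := (hT k).1 hkT
    rw [hA, Finset.mem_product]
    refine ⟨Finset.mem_univ _, ?_⟩
    rw [Fintype.mem_piFinset]
    intro j
    rw [hfdef]
    simp only
    rw [Finset.mem_Icc, ← abs_le]
    set j' := (imax k).succAbove j with hj'
    have h1 : |(k j':ℝ) - x₀ j'| ≤ R := hcoord k hkS j'
    have h2 : |((k j' - ⌈x₀ j'⌉ : ℤ):ℝ)| ≤ R + 1 := by
      have h4 : x₀ j' ≤ (⌈x₀ j'⌉:ℝ) := Int.le_ceil _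
      have h5 : (⌈x₀ j'⌉:ℝ) < x₀ j' + 1 := Int.ceil_lt_add_one _
      rw [abs_le] at h1 ⊢
      push_cast
      constructor <;> linarith [h1.1, h1.2]
    have h6 : ((|k j' - ⌈x₀ j'⌉|:ℤ):ℝ) ≤ ((⌈R⌉ + 1 : ℤ):ℝ) := by
      rw [Int.cast_abs]
      have h7 : R + 1 ≤ ((⌈R⌉ + 1 : ℤ):ℝ) := by push_cast; linarith [Int.le_ceil R]
      exact le_trans h2 h7
    exact_mod_cast h6
  have hIccR : ((Finset.Icc (-(⌈R⌉+1)) (⌈R⌉+1)).card : ℝ) ≤ 7*R := by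
    rw [Int.card_Icc]
    have hc1 : (1:ℤ) ≤ ⌈R⌉ := by exact_mod_cast Int.le_ceil_iff.2 (by norm_num; linarith)
    have hnn : (0:ℤ) ≤ ⌈R⌉ + 1 + 1 - -(⌈R⌉+1) := by omega
    have : ((⌈R⌉ + 1 + 1 - -(⌈R⌉+1)).toNat : ℤ) = 2*⌈R⌉ + 3 := by
      rw [Int.toNat_of_nonneg hnn]; ring
    have h8 : (((⌈R⌉ + 1 + 1 - -(⌈R⌉+1)).toNat : ℤ) : ℝ) = 2*(⌈R⌉:ℝ) + 3 := by
      rw [this]; push_cast; ring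
    push_cast at h8 ⊢
    rw [h8]
    have h9 : (⌈R⌉:ℝ) ≤ R + 1 := by linarith [Int.ceil_lt_add_one R]
    linarith
  have hAcard : (A.card : ℝ) ≤ ((m:ℝ)+1) * (7*R)^m := by
    rw [hA, Finset.card_product, Fintype.card_piFinset]
    rw [Finset.prod_const, Finset.card_univ, Fintype.card_fin, Finset.card_univ, Fintype.card_fin]
    push_cast
    have h10 : (((Finset.Icc (-(⌈R⌉+1)) (⌈R⌉+1)).card : ℝ))^m ≤ (7*R)^m :=
      pow_le_pow_left₀ (by positivity) hIccR m
    have h11 : (0:ℝ) ≤ ((m:ℝ)+1) := by positivity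
    exact mul_le_mul_of_nonneg_left h10 h11
  -- fiber bound
  have hfib : ∀ v ∈ T.image f, ((T.filter (fun k => f k = v)).card : ℝ) ≤ 4*((m:ℝ)+1)*w + 2 := by
    intro v hv
    obtain ⟨k₀, hk₀T, hk₀f⟩ := Finset.mem_image.1 hv
    subst hk₀f
    obtain ⟨i, hi⟩ : ∃ i, imax k₀ = i := ⟨_, rfl⟩
    have hfiber : ∀ k ∈ T.filter (fun k => f k = f k₀),
        imax k = i ∧ ∀ j : Fin m, k (i.succAbove j) = k₀ (i.succAbove j) := by
      intro k hk
      rw [Finset.mem_filter] at hk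
      have h1 : f k = f k₀ := hk.2
      rw [hfdef] at h1
      simp only [Prod.mk.injEq] at h1
      obtain ⟨h1a, h1b⟩ := h1
      rw [hi] at h1a
      refine ⟨h1a, fun j => ?_⟩
      have h2 := congrFun h1b j
      simp only [h1a, hi] at h2
      exact sub_left_inj.mp h2
    have hinj : Set.InjOn (fun k : Fin (m+1) → ℤ => k i) (↑(T.filter (fun k => f k = f k₀)) : Set (Fin (m+1) → ℤ)) := by
      intro a ha b hb hab
      have haf := hfiber a (Finset.mem_coe.1 ha)
      have hbf := hfiber b (Finset.mem_coe.1 hb)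
      have hab' : a i = b i := hab
      funext j
      rcases eq_or_ne j i with rfl | hne
      · exact hab'
      · obtain ⟨j', hj'⟩ := Fin.exists_succAbove_eq hne
        rw [← hj', haf.2 j', hbf.2 j']
    set s := ∑ j : Fin m, ((k₀ (i.succAbove j) : ℝ))^2 with hs
    have hs0 : 0 ≤ s := by positivity
    set G := (T.filter (fun k => f k = f k₀)).image (fun k => k i) with hGdef
    have hcardG : (T.filter (fun k => f k = f k₀)).card = G.card :=
      (Finset.card_image_of_injOn hinj).symm
    have hGcond : ∀ a ∈ G, ρ^2 ≤ (a:ℝ)^2 + s ∧ (a:ℝ)^2 + s ≤ (ρ+w)^2 ∧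
        ρ^2 ≤ ((m+1:ℕ):ℝ) * (a:ℝ)^2 := by
      intro a haG
      rw [hGdef, Finset.mem_image] at haG
      obtain ⟨k, hkmem, rfl⟩ := haG
      have hkfib := hfiber k hkmem
      rw [Finset.mem_filter] at hkmem
      have hkS : k ∈ S := (hT k).1 hkmem.1
      obtain ⟨hm1, hm2, -⟩ := hSmem k hkS
      have hdecomp : (∑ i', ((k i':ℝ))^2) = ((k i:ℝ))^2 + s := by
        rw [Fin.sum_univ_succAbove (fun i' => ((k i':ℝ))^2) i, hs]
        congr 1
        exact Finset.sum_congr rfl fun j _ => by rw [hkfib.2 j]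
      have hmax : (∑ i', ((k i':ℝ))^2) ≤ ((m+1:ℕ):ℝ) * ((k i:ℝ))^2 := by
        have h12 : ∀ i', ((k i':ℝ))^2 ≤ ((k i:ℝ))^2 := by
          intro i'
          have h13 : |k i'| ≤ |k i| := hkfib.1 ▸ himax k i'
          have h14 : (k i')^2 ≤ (k i)^2 := by
            have := pow_le_pow_left₀ (abs_nonneg (k i')) h13 2
            rwa [sq_abs, sq_abs] at this
          exact_mod_cast h14
        calc (∑ i', ((k i':ℝ))^2) ≤ ∑ _i' : Fin (m+1), ((k i:ℝ))^2 :=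
              Finset.sum_le_sum fun i' _ => h12 i'
          _ = ((m+1:ℕ):ℝ) * ((k i:ℝ))^2 := by
              rw [Finset.sum_const, Finset.card_univ, Fintype.card_fin, nsmul_eq_mul]
      refine ⟨by rw [← hdecomp]; exact hm1, by rw [← hdecomp]; exact hm2, ?_⟩
      calc ρ^2 ≤ ∑ i', ((k i':ℝ))^2 := hm1
        _ ≤ ((m+1:ℕ):ℝ) * ((k i:ℝ))^2 := hmax
    have hac := annulus_count (m+1) (by omega) ρ w s hρ hw hs0 G hGcond
    rw [hcardG]
    push_cast at hac ⊢
    linarith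
  -- assemble
  have hkey : (T.card : ℝ) ≤ (((m:ℝ)+1) * (7*R)^m) * (4*((m:ℝ)+1)*w + 2) := by
    have hsum := Finset.card_eq_sum_card_fiberwise
      (f := f) (s := T) (t := T.image f) (fun x hx => Finset.mem_image_of_mem f hx)
    calc (T.card:ℝ) = ∑ v ∈ T.image f, ((T.filter (fun k => f k = v)).card : ℝ) := by
          exact_mod_cast hsum
      _ ≤ ∑ _v ∈ T.image f, (4*((m:ℝ)+1)*w + 2) := Finset.sum_le_sum hfib
      _ = ((T.image f).card : ℝ) * (4*((m:ℝ)+1)*w + 2) := by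
          rw [Finset.sum_const, nsmul_eq_mul]
      _ ≤ (((m:ℝ)+1) * (7*R)^m) * (4*((m:ℝ)+1)*w + 2) := by
          apply mul_le_mul_of_nonneg_right _ (by positivity)
          calc ((T.image f).card : ℝ) ≤ (A.card:ℝ) := by
                exact_mod_cast Finset.card_le_card himg
            _ ≤ ((m:ℝ)+1) * (7*R)^m := hAcard
  have hncard : S.ncard = T.card := by
    rw [hTdef, Set.ncard_eq_toFinset_card S hfin]
  rw [hncard]
  calc (T.card : ℝ) ≤ (((m:ℝ)+1) * (7*R)^m) * (4*((m:ℝ)+1)*w + 2) := hkey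
    _ ≤ ((4*((m:ℝ)+1)+2) * ((m:ℝ)+1) * 7^m) * R^m * (w+1) := by
          rw [mul_pow]
          have hfac : 4*((m:ℝ)+1)*w + 2 ≤ (4*((m:ℝ)+1)+2)*(w+1) := by
            nlinarith [Nat.cast_nonneg (α := ℝ) m]
          have hnn : (0:ℝ) ≤ ((m:ℝ)+1) * (7^m * R^m) := by positivity
          calc ((m:ℝ)+1) * (7^m * R^m) * (4*((m:ℝ)+1)*w + 2)
              ≤ ((m:ℝ)+1) * (7^m * R^m) * ((4*((m:ℝ)+1)+2)*(w+1)) :=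
                mul_le_mul_of_nonneg_left hfac hnn
            _ = ((4*((m:ℝ)+1)+2) * ((m:ℝ)+1) * 7^m) * R^m * (w+1) := by ring
end
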